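/- Let Q_1 and Q_2 be the quantile functions of probability measures μ_1 and μ_2 on ℝ. For p ≥ 1, the p-Wasserstein distance satisfies W_p(μ_1, μ_2)^p = ∫_0^1 |Q_1(r) − Q_2(r)|^p dr, i.e., the infimum of E[|X_1 − X_2|^p] over all couplings (X_1, X_2) of μ_1 and μ_2 is attained by the comonotone coupling (Q_1(U), Q_2(U)) with U uniform on (0,1). -/

import Mathlib

open MeasureTheory

/-- CDF of a measure on ℝ. -/
noncomputable def mcdf (μ : Measure ℝ) (x : ℝ) : ℝ := (μ (Set.Iic x)).toReal

/-- Quantile function of a measure on ℝ. -/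
noncomputable def mquantile (μ : Measure ℝ) (r : ℝ) : ℝ := sInf {x : ℝ | r ≤ mcdf μ x}

/-!
Let `κ` be an s-finite measure on `ℝ × ℝ` and consider the cost `c x y = κ ([x ⊓ y, x ⊔ y)²)`.
By Tonelli, the expected cost under a coupling `γ` is
`∫ γ {z | s, t ∈ [z.1 ⊓ z.2, z.1 ⊔ z.2)} dκ(s, t)`. By inclusion–exclusion, the `γ`-mass of this
event equals a quantity fixed by the marginals minus `γ (Iic s ×ˢ Iic t) + γ (Iic t ×ˢ Iic s)`.
Each quadrant mass is at most `F₁ s ⊓ F₂ t` (Fréchet–Hoeffding), with equality for the comonotone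
coupling `(Q₁ U, Q₂ U)`, so this coupling minimises the expected cost for every `(s, t)` at once.
The cost `|x - y| ^ p` has this form: for `p = 1` take Lebesgue measure on the diagonal, and for
`p > 1` the density `p (p - 1) / 2 * |s - t| ^ (p - 2)`.
-/

open Set Filter ProbabilityTheory
open scoped Topology ENNReal

section Quantile

variable (μ : Measure ℝ) [IsProbabilityMeasure μ]

lemma mcdf_eq_cdf : mcdf μ = cdf μ := funext fun x => (cdf_eq_real μ x).symm

lemma mcdf_le_one (x : ℝ) : mcdf μ x ≤ 1 := by
  rw [mcdf_eq_cdf]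
  exact cdf_le_one μ x

lemma ofReal_mcdf (x : ℝ) : ENNReal.ofReal (mcdf μ x) = μ (Iic x) := by
  rw [mcdf_eq_cdf, ofReal_cdf]

lemma mquantile_le_iff {r : ℝ} (hr : r ∈ Ioo 0 1) (x : ℝ) :
    mquantile μ r ≤ x ↔ r ≤ mcdf μ x := by
  unfold mquantile
  rw [mcdf_eq_cdf]
  have hne : {y | r ≤ cdf μ y}.Nonempty :=
    ((tendsto_cdf_atTop μ).eventually_const_le hr.2).exists
  have hbdd : BddBelow {y | r ≤ cdf μ y} := by
    obtain ⟨y₀, hy₀⟩ := ((tendsto_cdf_atBot μ).eventually_lt_const hr.1).exists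
    exact ⟨y₀, fun y hy => le_of_not_gt fun hyy₀ =>
      (hy.trans (monotone_cdf μ hyy₀.le)).not_gt hy₀⟩
  refine ⟨fun h => ?_, fun h => csInf_le hbdd h⟩
  have hright : Tendsto (cdf μ) (𝓝[>] x) (𝓝 (cdf μ x)) :=
    ((cdf μ).right_continuous x).tendsto.mono_left (nhdsWithin_mono x Ioi_subset_Ici_self)
  refine ge_of_tendsto hright ?_
  filter_upwards [self_mem_nhdsWithin] with y hy
  obtain ⟨z, hz, hzy⟩ := (csInf_lt_iff hbdd hne).1 (h.trans_lt hy)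
  exact hz.trans (monotone_cdf μ hzy.le)

lemma aemeasurable_mquantile : AEMeasurable (mquantile μ) (volume.restrict (Ioo 0 1)) :=
  aemeasurable_restrict_of_monotoneOn measurableSet_Ioo fun _ ha _ hb hab =>
    (mquantile_le_iff μ ha _).2 (hab.trans ((mquantile_le_iff μ hb _).1 le_rfl))

lemma volume_restrict_Ioo_Iic {c : ℝ} (hc : c ≤ 1) :
    volume.restrict (Ioo (0 : ℝ) 1) (Iic c) = ENNReal.ofReal c := by
  rw [Measure.restrict_congr_set Ioo_ae_eq_Ioc, Measure.restrict_apply measurableSet_Iic,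
    inter_comm, Ioc_inter_Iic, Real.volume_Ioc, inf_eq_right.2 hc, sub_zero]

lemma map_mquantile : (volume.restrict (Ioo 0 1)).map (mquantile μ) = μ := by
  refine Measure.ext_of_Iic _ _ fun x => ?_
  have hpre : mquantile μ ⁻¹' Iic x ∩ Ioo 0 1 = Iic (mcdf μ x) ∩ Ioo 0 1 := by
    ext r
    simp +contextual [mquantile_le_iff μ]
  rw [Measure.map_apply_of_aemeasurable (aemeasurable_mquantile μ) measurableSet_Iic,
    Measure.restrict_apply' measurableSet_Ioo, hpre, ← Measure.restrict_apply' measurableSet_Ioo,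
    volume_restrict_Ioo_Iic (mcdf_le_one μ x), ofReal_mcdf]

end Quantile

lemma measure_Iic_prod_Iic_le_of_map {γ : Measure (ℝ × ℝ)} {μ₁ μ₂ : Measure ℝ}
    (h₁ : γ.map Prod.fst = μ₁) (h₂ : γ.map Prod.snd = μ₂) (s t : ℝ) :
    γ (Iic s ×ˢ Iic t) ≤ min (μ₁ (Iic s)) (μ₂ (Iic t)) := by
  rw [← h₁, ← h₂, Measure.map_apply measurable_fst measurableSet_Iic,
    Measure.map_apply measurable_snd measurableSet_Iic]
  exact le_min (measure_mono fun z hz => hz.1) (measure_mono fun z hz => hz.2)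

section Comonotone

variable (μ₁ μ₂ : Measure ℝ) [IsProbabilityMeasure μ₁] [IsProbabilityMeasure μ₂]

noncomputable def comonotoneCoupling : Measure (ℝ × ℝ) :=
  (volume.restrict (Ioo 0 1)).map fun r => (mquantile μ₁ r, mquantile μ₂ r)

lemma aemeasurable_mquantile_prod :
    AEMeasurable (fun r => (mquantile μ₁ r, mquantile μ₂ r)) (volume.restrict (Ioo 0 1)) :=
  (aemeasurable_mquantile μ₁).prodMk (aemeasurable_mquantile μ₂)

instance : IsProbabilityMeasure (comonotoneCoupling μ₁ μ₂) :=
  have : IsProbabilityMeasure (volume.restrict (Ioo (0 : ℝ) 1)) := ⟨by simp⟩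
  Measure.isProbabilityMeasure_map (aemeasurable_mquantile_prod μ₁ μ₂)

lemma comonotoneCoupling_map_fst : (comonotoneCoupling μ₁ μ₂).map Prod.fst = μ₁ := by
  rw [comonotoneCoupling, AEMeasurable.map_map_of_aemeasurable measurable_fst.aemeasurable
    (aemeasurable_mquantile_prod μ₁ μ₂)]
  exact map_mquantile μ₁

lemma comonotoneCoupling_map_snd : (comonotoneCoupling μ₁ μ₂).map Prod.snd = μ₂ := by
  rw [comonotoneCoupling, AEMeasurable.map_map_of_aemeasurable measurable_snd.aemeasurable
    (aemeasurable_mquantile_prod μ₁ μ₂)]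
  exact map_mquantile μ₂

lemma comonotoneCoupling_Iic_prod_Iic (s t : ℝ) :
    comonotoneCoupling μ₁ μ₂ (Iic s ×ˢ Iic t) = min (μ₁ (Iic s)) (μ₂ (Iic t)) := by
  have hpre : (fun r => (mquantile μ₁ r, mquantile μ₂ r)) ⁻¹' (Iic s ×ˢ Iic t) ∩ Ioo 0 1
      = Iic (min (mcdf μ₁ s) (mcdf μ₂ t)) ∩ Ioo 0 1 := by
    ext r
    simp +contextual [mquantile_le_iff μ₁, mquantile_le_iff μ₂]
  rw [comonotoneCoupling, Measure.map_apply_of_aemeasurable (aemeasurable_mquantile_prod μ₁ μ₂)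
    (measurableSet_Iic.prod measurableSet_Iic), Measure.restrict_apply' measurableSet_Ioo, hpre,
    ← Measure.restrict_apply' measurableSet_Ioo,
    volume_restrict_Ioo_Iic (min_le_of_left_le (mcdf_le_one μ₁ s)), ENNReal.ofReal_min,
    ofReal_mcdf, ofReal_mcdf]

lemma integral_comonotoneCoupling {f : ℝ × ℝ → ℝ} (hf : Measurable f) :
    ∫ z, f z ∂(comonotoneCoupling μ₁ μ₂)
      = ∫ r in (0 : ℝ)..1, f (mquantile μ₁ r, mquantile μ₂ r) := by
  rw [comonotoneCoupling, integral_map (aemeasurable_mquantile_prod μ₁ μ₂)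
    hf.aestronglyMeasurable, intervalIntegral.integral_of_le zero_le_one,
    integral_Ioc_eq_integral_Ioo]

end Comonotone

section Straddling

def intervalSquare (x y : ℝ) : Set (ℝ × ℝ) := Ico (x ⊓ y) (x ⊔ y) ×ˢ Ico (x ⊓ y) (x ⊔ y)

def straddling (s t : ℝ) : Set (ℝ × ℝ) := {z | (s, t) ∈ intervalSquare z.1 z.2}

lemma measurableSet_mem_intervalSquare :
    MeasurableSet {q : (ℝ × ℝ) × (ℝ × ℝ) | q.2 ∈ intervalSquare q.1.1 q.1.2} := by
  simp only [intervalSquare, mem_prod, mem_Ico]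
  measurability

lemma measurableSet_straddling (s t : ℝ) : MeasurableSet (straddling s t) :=
  measurableSet_mem_intervalSquare.preimage (measurable_id.prodMk measurable_const)

lemma indicator_straddling_add (s t : ℝ) (z : ℝ × ℝ) :
    (straddling s t).indicator (1 : ℝ × ℝ → ℝ≥0∞) z + (Iic s ×ˢ Iic t).indicator 1 z
      + (Iic t ×ˢ Iic s).indicator 1 z
      = (Prod.fst ⁻¹' Iic (s ⊓ t)).indicator 1 z + (Prod.snd ⁻¹' Iic (s ⊓ t)).indicator 1 z := by
  obtain ⟨x, y⟩ := z
  simp only [indicator_apply, straddling, intervalSquare, mem_prod, mem_Ico, mem_Iic,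
    Pi.one_apply, inf_le_iff, ← not_le]
  by_cases h1 : x ≤ s <;> by_cases h2 : y ≤ s <;> by_cases h3 : x ≤ t <;> by_cases h4 : y ≤ t <;>
    simp [h1, h2, h3, h4] <;> order

lemma measure_straddling_add (γ : Measure (ℝ × ℝ)) (s t : ℝ) :
    γ (straddling s t) + γ (Iic s ×ˢ Iic t) + γ (Iic t ×ˢ Iic s)
      = γ (Prod.fst ⁻¹' Iic (s ⊓ t)) + γ (Prod.snd ⁻¹' Iic (s ⊓ t)) := by
  have h := lintegral_congr (μ := γ) (indicator_straddling_add s t)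
  have hq : ∀ a b : ℝ, MeasurableSet (Iic a ×ˢ Iic b) := fun a b =>
    measurableSet_Iic.prod measurableSet_Iic
  rwa [lintegral_add_right _ (measurable_one.indicator (hq t s)),
    lintegral_add_right _ (measurable_one.indicator (hq s t)),
    lintegral_add_right _ (measurable_one.indicator (measurableSet_Iic.preimage measurable_snd)),
    lintegral_indicator_one (measurableSet_straddling s t), lintegral_indicator_one (hq s t),
    lintegral_indicator_one (hq t s),
    lintegral_indicator_one (measurableSet_Iic.preimage measurable_fst),
    lintegral_indicator_one (measurableSet_Iic.preimage measurable_snd)] at h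

lemma comonotoneCoupling_straddling_le (μ₁ μ₂ : Measure ℝ) [IsProbabilityMeasure μ₁]
    [IsProbabilityMeasure μ₂] {γ : Measure (ℝ × ℝ)} [IsFiniteMeasure γ]
    (h₁ : γ.map Prod.fst = μ₁) (h₂ : γ.map Prod.snd = μ₂) (s t : ℝ) :
    comonotoneCoupling μ₁ μ₂ (straddling s t) ≤ γ (straddling s t) := by
  have hmarg : ∀ ν : Measure (ℝ × ℝ), ν.map Prod.fst = μ₁ → ν.map Prod.snd = μ₂ →
      ν (Prod.fst ⁻¹' Iic (s ⊓ t)) + ν (Prod.snd ⁻¹' Iic (s ⊓ t))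
        = μ₁ (Iic (s ⊓ t)) + μ₂ (Iic (s ⊓ t)) := fun ν hν₁ hν₂ => by
    rw [← hν₁, ← hν₂, Measure.map_apply measurable_fst measurableSet_Iic,
      Measure.map_apply measurable_snd measurableSet_Iic]
  have hfin : min (μ₁ (Iic s)) (μ₂ (Iic t)) + min (μ₁ (Iic t)) (μ₂ (Iic s)) ≠ ∞ := by
    simp [measure_ne_top]
  refine (ENNReal.add_le_add_iff_right hfin).1 ?_
  calc comonotoneCoupling μ₁ μ₂ (straddling s t)
        + (min (μ₁ (Iic s)) (μ₂ (Iic t)) + min (μ₁ (Iic t)) (μ₂ (Iic s)))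
      = γ (straddling s t) + γ (Iic s ×ˢ Iic t) + γ (Iic t ×ˢ Iic s) := by
        rw [← comonotoneCoupling_Iic_prod_Iic, ← comonotoneCoupling_Iic_prod_Iic, ← add_assoc,
          measure_straddling_add, measure_straddling_add,
          hmarg _ (comonotoneCoupling_map_fst μ₁ μ₂) (comonotoneCoupling_map_snd μ₁ μ₂),
          hmarg γ h₁ h₂]
    _ ≤ γ (straddling s t)
        + (min (μ₁ (Iic s)) (μ₂ (Iic t)) + min (μ₁ (Iic t)) (μ₂ (Iic s))) := by
        rw [add_assoc]
        gcongr <;> exact measure_Iic_prod_Iic_le_of_map h₁ h₂ _ _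

lemma lintegral_measure_intervalSquare_eq_lintegral_straddling (γ κ : Measure (ℝ × ℝ))
    [SFinite γ] [SFinite κ] :
    ∫⁻ z, κ (intervalSquare z.1 z.2) ∂γ = ∫⁻ w, γ (straddling w.1 w.2) ∂κ :=
  (Measure.prod_apply measurableSet_mem_intervalSquare).symm.trans
    (Measure.prod_apply_symm measurableSet_mem_intervalSquare)

theorem lintegral_comonotoneCoupling_le (κ : Measure (ℝ × ℝ)) [SFinite κ] (μ₁ μ₂ : Measure ℝ)
    [IsProbabilityMeasure μ₁] [IsProbabilityMeasure μ₂] {γ : Measure (ℝ × ℝ)} [IsFiniteMeasure γ]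
    (h₁ : γ.map Prod.fst = μ₁) (h₂ : γ.map Prod.snd = μ₂) :
    ∫⁻ z, κ (intervalSquare z.1 z.2) ∂(comonotoneCoupling μ₁ μ₂)
      ≤ ∫⁻ z, κ (intervalSquare z.1 z.2) ∂γ := by
  rw [lintegral_measure_intervalSquare_eq_lintegral_straddling,
    lintegral_measure_intervalSquare_eq_lintegral_straddling]
  exact lintegral_mono fun w => comonotoneCoupling_straddling_le μ₁ μ₂ h₁ h₂ w.1 w.2

end Straddling

section Calculus

open intervalIntegral

variable {q : ℝ}

lemma intervalIntegrable_abs_rpow (hq : -1 < q) (a b : ℝ) :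
    IntervalIntegrable (fun u : ℝ => |u| ^ q) volume a b := by
  have hpos : ∀ c, 0 ≤ c → IntervalIntegrable (fun u : ℝ => |u| ^ q) volume 0 c := fun c hc =>
    (intervalIntegrable_rpow' hq).congr fun u hu => by
      rw [uIoc_of_le hc] at hu
      simp [abs_of_pos hu.1]
  have hall : ∀ c, IntervalIntegrable (fun u : ℝ => |u| ^ q) volume 0 c := fun c => by
    rcases le_total 0 c with hc | hc
    · exact hpos c hc
    · simpa using (hpos (-c) (neg_nonneg.2 hc)).comp_sub_left 0
  exact (hall a).symm.trans (hall b)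

lemma integral_abs_rpow (hq : -1 < q) {a b : ℝ} (ha : a ≤ 0) (hb : 0 ≤ b) :
    ∫ u in a..b, |u| ^ q = ((-a) ^ (q + 1) + b ^ (q + 1)) / (q + 1) := by
  have hpos : ∀ c, 0 ≤ c → ∫ u in (0 : ℝ)..c, |u| ^ q = c ^ (q + 1) / (q + 1) := fun c hc => by
    rw [integral_congr (g := fun u => u ^ q) fun u hu => by
        rw [uIcc_of_le hc] at hu; simp [abs_of_nonneg hu.1],
      integral_rpow (Or.inl hq), Real.zero_rpow (by linarith), sub_zero]
  have hneg : ∫ u in a..0, |u| ^ q = (-a) ^ (q + 1) / (q + 1) := by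
    simpa [hpos (-a) (neg_nonneg.2 ha)] using integral_comp_neg (a := a) (b := 0) (|·| ^ q)
  rw [← integral_add_adjacent_intervals (intervalIntegrable_abs_rpow hq _ _)
    (intervalIntegrable_abs_rpow hq _ _), hneg, hpos b hb, add_div]

lemma lintegral_Ico_ofReal {f : ℝ → ℝ} {a b : ℝ} (hab : a ≤ b)
    (hf : IntervalIntegrable f volume a b) (hnn : ∀ t ∈ Ioc a b, 0 ≤ f t) :
    ∫⁻ t in Ico a b, ENNReal.ofReal (f t) = ENNReal.ofReal (∫ t in a..b, f t) := by
  rw [Measure.restrict_congr_set Ico_ae_eq_Ioc, integral_of_le hab,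
    ofReal_integral_eq_lintegral_ofReal ((intervalIntegrable_iff_integrableOn_Ioc_of_le hab).1 hf)
      ((ae_restrict_mem measurableSet_Ioc).mono hnn)]

end Calculus

section Kernel

noncomputable def rpowKernel (p : ℝ) : Measure (ℝ × ℝ) :=
  volume.withDensity fun w => ENNReal.ofReal (p * (p - 1) / 2 * |w.1 - w.2| ^ (p - 2))

lemma lintegral_Ico_rpowKernel_density {p : ℝ} (hp : 1 < p) {m M s : ℝ} (hs : s ∈ Ico m M) :
    ∫⁻ t in Ico m M, ENNReal.ofReal (p * (p - 1) / 2 * |s - t| ^ (p - 2))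
      = ENNReal.ofReal (p / 2 * ((s - m) ^ (p - 1) + (M - s) ^ (p - 1))) := by
  have hint : IntervalIntegrable (fun t => |s - t| ^ (p - 2)) volume m M := by
    simpa using (intervalIntegrable_abs_rpow (by linarith) (s - m) (s - M)).comp_sub_left s
  have hp1 : p - 1 ≠ 0 := by linarith
  rw [lintegral_Ico_ofReal (hs.1.trans hs.2.le) (hint.const_mul _) fun t _ => by positivity,
    intervalIntegral.integral_const_mul,
    intervalIntegral.integral_comp_sub_left (fun u => |u| ^ (p - 2)),
    integral_abs_rpow (by linarith) (by linarith [hs.2]) (by linarith [hs.1]),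
    show p - 2 + 1 = p - 1 by ring]
  congr 1
  field_simp
  rw [neg_sub, add_comm]

lemma rpowKernel_intervalSquare {p : ℝ} (hp : 1 < p) (x y : ℝ) :
    rpowKernel p (intervalSquare x y) = ENNReal.ofReal (|x - y| ^ p) := by
  set m := x ⊓ y
  set M := x ⊔ y
  have hp1 : 0 ≤ p - 1 := by linarith
  have hc₁ : Continuous fun s => (s - m) ^ (p - 1) := by fun_prop (disch := assumption)
  have hc₂ : Continuous fun s => (M - s) ^ (p - 1) := by fun_prop (disch := assumption)
  have hnn : ∀ s ∈ Ioc m M, 0 ≤ p / 2 * ((s - m) ^ (p - 1) + (M - s) ^ (p - 1)) := fun s hs => by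
    have := hs.1
    have := hs.2
    positivity
  rw [rpowKernel, intervalSquare, withDensity_apply _ (measurableSet_Ico.prod measurableSet_Ico),
    Measure.volume_eq_prod, setLIntegral_prod _ (by fun_prop),
    setLIntegral_congr_fun measurableSet_Ico fun s hs => lintegral_Ico_rpowKernel_density hp hs,
    lintegral_Ico_ofReal inf_le_sup (Continuous.intervalIntegrable (by fun_prop) _ _) hnn,
    intervalIntegral.integral_const_mul,
    intervalIntegral.integral_add (hc₁.intervalIntegrable _ _) (hc₂.intervalIntegrable _ _),
    intervalIntegral.integral_comp_sub_right (· ^ (p - 1)),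
    intervalIntegral.integral_comp_sub_left (· ^ (p - 1)), integral_rpow (Or.inl (by linarith)),
    integral_rpow (Or.inl (by linarith)), sub_self, sub_self, sub_add_cancel,
    Real.zero_rpow (by linarith), max_sub_min_eq_abs']
  congr 1
  field_simp
  ring

lemma exists_measure_intervalSquare_eq_rpow {p : ℝ} (hp : 1 ≤ p) :
    ∃ κ : Measure (ℝ × ℝ), SFinite κ ∧
      ∀ x y, κ (intervalSquare x y) = ENNReal.ofReal (|x - y| ^ p) := by
  rcases hp.eq_or_lt with rfl | hp
  · refine ⟨volume.map fun s => (s, s), inferInstance, fun x y => ?_⟩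
    rw [intervalSquare, Measure.map_apply (by fun_prop) (measurableSet_Ico.prod measurableSet_Ico),
      mk_preimage_prod, preimage_id', inter_self, Real.volume_Ico, max_sub_min_eq_abs',
      Real.rpow_one]
  · exact ⟨rpowKernel p, by unfold rpowKernel; infer_instance, rpowKernel_intervalSquare hp⟩

end Kernel

lemma memLp_of_map_eq {α : Type*} [MeasurableSpace α] {p : ℝ} (hp : 0 < p) {γ : Measure α}
    {ν : Measure ℝ} {f : α → ℝ} (hf : Measurable f) (hν : γ.map f = ν)
    (hmom : Integrable (fun x => |x| ^ p) ν) : MemLp f (ENNReal.ofReal p) γ := by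
  subst hν
  refine (memLp_map_measure_iff aestronglyMeasurable_id hf.aemeasurable).1
    ((integrable_norm_rpow_iff aestronglyMeasurable_id (by simpa using hp)
      ENNReal.ofReal_ne_top).1 ?_)
  simpa [ENNReal.toReal_ofReal hp.le] using hmom

lemma integrable_abs_sub_rpow_of_map {p : ℝ} (hp : 0 < p) {μ₁ μ₂ : Measure ℝ}
    {γ : Measure (ℝ × ℝ)} (h₁ : γ.map Prod.fst = μ₁) (h₂ : γ.map Prod.snd = μ₂)
    (hmom₁ : Integrable (fun x => |x| ^ p) μ₁) (hmom₂ : Integrable (fun x => |x| ^ p) μ₂) :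
    Integrable (fun z : ℝ × ℝ => |z.1 - z.2| ^ p) γ := by
  simpa [ENNReal.toReal_ofReal hp.le] using
    ((memLp_of_map_eq hp measurable_fst h₁ hmom₁).sub
      (memLp_of_map_eq hp measurable_snd h₂ hmom₂)).integrable_norm_rpow
      (by simpa using hp) ENNReal.ofReal_ne_top

theorem wasserstein_1d_quantile_representation
    (p : ℝ) (hp : 1 ≤ p)
    (μ₁ μ₂ : Measure ℝ) [IsProbabilityMeasure μ₁] [IsProbabilityMeasure μ₂]
    (hmom₁ : Integrable (fun x => |x| ^ p) μ₁)
    (hmom₂ : Integrable (fun x => |x| ^ p) μ₂) :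
    IsLeast
      {c : ℝ | ∃ γ : Measure (ℝ × ℝ), IsProbabilityMeasure γ ∧
        γ.map Prod.fst = μ₁ ∧ γ.map Prod.snd = μ₂ ∧
        c = ∫ z : ℝ × ℝ, |z.1 - z.2| ^ p ∂γ}
      (∫ r in (0:ℝ)..1, |mquantile μ₁ r - mquantile μ₂ r| ^ p) ∧
    (let γ₀ : Measure (ℝ × ℝ) :=
        Measure.map (fun r => (mquantile μ₁ r, mquantile μ₂ r))
          (volume.restrict (Set.Ioo (0:ℝ) 1));
      γ₀.map Prod.fst = μ₁ ∧ γ₀.map Prod.snd = μ₂ ∧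
      (∫ z : ℝ × ℝ, |z.1 - z.2| ^ p ∂γ₀)
        = ∫ r in (0:ℝ)..1, |mquantile μ₁ r - mquantile μ₂ r| ^ p) := by
  have hmeas : Measurable fun z : ℝ × ℝ => |z.1 - z.2| ^ p := by fun_prop
  have hcost := integral_comonotoneCoupling μ₁ μ₂ hmeas
  have hfst := comonotoneCoupling_map_fst μ₁ μ₂
  have hsnd := comonotoneCoupling_map_snd μ₁ μ₂
  refine ⟨⟨⟨_, inferInstance, hfst, hsnd, hcost.symm⟩, ?_⟩, hfst, hsnd, hcost⟩
  rintro _ ⟨γ, hγ, h₁, h₂, rfl⟩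
  obtain ⟨κ, hκ, hκ_square⟩ := exists_measure_intervalSquare_eq_rpow hp
  have hnn : ∀ ν : Measure (ℝ × ℝ), 0 ≤ᵐ[ν] fun z => |z.1 - z.2| ^ p :=
    fun ν => ae_of_all _ fun z => by positivity
  rw [← hcost, integral_eq_lintegral_of_nonneg_ae (hnn _) hmeas.aestronglyMeasurable,
    integral_eq_lintegral_of_nonneg_ae (hnn _) hmeas.aestronglyMeasurable]
  refine ENNReal.toReal_mono
    (integrable_abs_sub_rpow_of_map (by linarith) h₁ h₂ hmom₁ hmom₂).lintegral_lt_top.ne ?_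
  simpa only [hκ_square] using lintegral_comonotoneCoupling_le κ μ₁ μ₂ h₁ h₂
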